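/- arXiv:1212.1294 — 3 statements merged into one kernel-verified Lean document; each statement's English description precedes it below -/
import Mathlib

section
/- For an odd positive integer N and an integer l with |l| > 2 and l ≡ 2 (mod N), the map sending a matrix γ = [[1+aN, b],[cN, 1+dN]] in SL₂(ℤ) with trace l to the quadratic form q_γ = [cN, (d−a)N, −b] (i.e. cN·X² + (d−a)N·XY − b·Y²) is a bijection from the set Γ_{1,l}(N) of matrices in Γ₁(N) of trace l onto the set Q_l(N) of integral binary quadratic forms [aN, bN, c] of discriminant l² − 4. -/
/-!
`q_γ` records the entries of the trace-free part of `γ`, so its discriminant is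
`tr² - 4 det = l² - 4`, and `γ` is recovered from `q_γ` and `l` by putting `(l ∓ bN) / 2` on the
diagonal. Halving is integral because the discriminant forces `l ≡ bN (mod 2)`, and it keeps the
diagonal `≡ 1 (mod N)` because `N` is odd and `l ≡ 2 (mod N)`.
-/

open Matrix

section

variable {R : Type*} [CommRing R]

def formOf (γ : Matrix (Fin 2) (Fin 2) R) : R × R × R :=
  (γ 1 0, γ 1 1 - γ 0 0, -γ 0 1)

def formDisc (q : R × R × R) : R :=
  q.2.1 ^ 2 - 4 * q.1 * q.2.2

theorem formDisc_formOf (γ : Matrix (Fin 2) (Fin 2) R) :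
    formDisc (formOf γ) = γ.trace ^ 2 - 4 * γ.det := by
  rw [formDisc, formOf, trace_fin_two, det_fin_two]
  ring

theorem eq_of_trace_eq_of_formOf_eq [NoZeroDivisors R] [NeZero (2 : R)]
    {γ δ : Matrix (Fin 2) (Fin 2) R} (htr : γ.trace = δ.trace) (hq : formOf γ = formOf δ) :
    γ = δ := by
  simp only [formOf, Prod.mk.injEq, neg_inj] at hq
  obtain ⟨h10, hdiff, h01⟩ := hq
  rw [trace_fin_two, trace_fin_two] at htr
  have h00 : γ 0 0 = δ 0 0 :=
    mul_left_cancel₀ two_ne_zero (by linear_combination htr - hdiff)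
  have h11 : γ 1 1 = δ 1 1 := by linear_combination hdiff + h00
  ext i j
  fin_cases i <;> fin_cases j <;> assumption

end

theorem even_sub_of_formDisc_eq {q : ℤ × ℤ × ℤ} {l : ℤ} (hq : formDisc q = l ^ 2 - 4) :
    Even (l - q.2.1) := by
  have hsq : Even (l ^ 2 - q.2.1 ^ 2) :=
    ⟨2 - 2 * q.1 * q.2.2, by rw [formDisc] at hq; linear_combination -hq⟩
  rwa [Int.even_sub, Int.even_pow' two_ne_zero, Int.even_pow' two_ne_zero, ← Int.even_sub] at hsq

theorem exists_formOf_eq {q : ℤ × ℤ × ℤ} {l : ℤ} (hq : formDisc q = l ^ 2 - 4) :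
    ∃ γ : Matrix (Fin 2) (Fin 2) ℤ,
      γ.det = 1 ∧ γ.trace = l ∧ 2 * γ 0 0 = l - q.2.1 ∧ formOf γ = q := by
  obtain ⟨k, hk⟩ := even_sub_of_formDisc_eq hq
  let γ : Matrix (Fin 2) (Fin 2) ℤ := !![k, -q.2.2; q.1, l - k]
  have htr : γ.trace = l := by simp [γ, trace_fin_two]
  have hform : formOf γ = q := by
    ext <;> simp [γ, formOf]
    linear_combination hk
  -- the discriminant `tr² - 4 det` of `γ` is that of `q`, which pins down `det γ`
  have hdet : γ.det = 1 := by
    have h := formDisc_formOf γ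
    rw [hform, hq, htr] at h
    linarith
  exact ⟨γ, hdet, htr, show 2 * k = _ by linear_combination -hk, hform⟩

theorem gamma1l_bijOn_Ql_general (N : ℕ) (hN : Odd N) (l : ℤ)
    (hlN : (N : ℤ) ∣ (l - 2)) :
    Set.BijOn (fun γ : Matrix (Fin 2) (Fin 2) ℤ => (γ 1 0, γ 1 1 - γ 0 0, -γ 0 1))
      {γ : Matrix (Fin 2) (Fin 2) ℤ |
        γ.det = 1 ∧ (N : ℤ) ∣ (γ 0 0 - 1) ∧ (N : ℤ) ∣ (γ 1 1 - 1) ∧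
        (N : ℤ) ∣ γ 1 0 ∧ γ.trace = l}
      {q : ℤ × ℤ × ℤ |
        (N : ℤ) ∣ q.1 ∧ (N : ℤ) ∣ q.2.1 ∧ q.2.1 ^ 2 - 4 * q.1 * q.2.2 = l ^ 2 - 4} := by
  refine ⟨?mapsTo, ?injOn, ?surjOn⟩
  case mapsTo =>
    rintro γ ⟨hdet, h00, h11, h10, htr⟩
    refine ⟨h10, by simpa using dvd_sub h11 h00, ?_⟩
    change formDisc (formOf γ) = _
    rw [formDisc_formOf, hdet, htr, mul_one]
  case injOn =>
    rintro γ ⟨-, -, -, -, hγ⟩ δ ⟨-, -, -, -, hδ⟩ hq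
    exact eq_of_trace_eq_of_formOf_eq (hγ.trans hδ.symm) hq
  case surjOn =>
    rintro q ⟨hq1, hq2, hdisc⟩
    obtain ⟨γ, hdet, htr, hdiag, rfl⟩ := exists_formOf_eq hdisc
    have h00 : (N : ℤ) ∣ γ 0 0 - 1 := by
      refine (Int.isCoprime_two_right.2 hN.natCast).dvd_of_dvd_mul_left ?_
      have h2 : 2 * (γ 0 0 - 1) = (l - 2) - (formOf γ).2.1 := by linear_combination hdiag
      exact h2 ▸ dvd_sub hlN hq2
    have h11 : γ 1 1 - 1 = (γ 0 0 - 1) + (formOf γ).2.1 := by rw [formOf]; ring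
    refine ⟨γ, ⟨hdet, h00, h11 ▸ dvd_add h00 hq2, hq1, htr⟩, rfl⟩

/-- For an odd positive integer `N` and an integer `l` with `|l| > 2` and
`l ≡ 2 (mod N)`, the map `γ = [[1+aN, b],[cN, 1+dN]] ↦ q_γ = [cN, (d−a)N, −b]` is a bijection
from `Γ_{1,l}(N)` (matrices in `Γ₁(N)` of trace `l`) onto `Q_l(N)` (integral binary quadratic
forms `[aN, bN, c]` of discriminant `l² − 4`). -/
theorem gamma1l_bijOn_Ql (N : ℕ) (hN : Odd N) (hNpos : 0 < N) (l : ℤ)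
    (hl : 2 < |l|) (hlN : (N : ℤ) ∣ (l - 2)) :
    Set.BijOn (fun γ : Matrix (Fin 2) (Fin 2) ℤ => (γ 1 0, γ 1 1 - γ 0 0, -γ 0 1))
      {γ : Matrix (Fin 2) (Fin 2) ℤ |
        γ.det = 1 ∧ (N : ℤ) ∣ (γ 0 0 - 1) ∧ (N : ℤ) ∣ (γ 1 1 - 1) ∧
        (N : ℤ) ∣ γ 1 0 ∧ γ.trace = l}
      {q : ℤ × ℤ × ℤ |
        (N : ℤ) ∣ q.1 ∧ (N : ℤ) ∣ q.2.1 ∧ q.2.1 ^ 2 - 4 * q.1 * q.2.2 = l ^ 2 - 4} :=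
  gamma1l_bijOn_Ql_general N hN l hlN
end

section
/- For a Fuchsian-type lattice point count: with ε > 1 and θ > θ̄ real, and the strict positivity condition m − θn > 0, each orbit of the cyclic group generated by the automorph α_q acting on {(m,n) : q(n,−m) > 0, m − θn > 0} contains exactly one representative with 1 < (m − θ̄n)/(m − θn) ≤ ε², and this condition is equivalent to n > 0 and m ≥ E·n where E = (ε²θ − θ̄)/(ε² − 1). -/
/-- With `ε > 1`, `θ > θ̄`, and `m − θn > 0` (and `m − θ̄n > 0`, i.e.
`q(n,−m) > 0`), each orbit under the automorph (which scales the ratio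
`(m − θ̄n)/(m − θn)` by `ε^{−2k}`) contains exactly one representative with
`1 < ratio ≤ ε²`; moreover `1 < ratio ↔ n > 0` and `ratio ≤ ε² ↔ m ≥ E·n` where
`E = (ε²θ − θ̄)/(ε² − 1)`. -/
theorem orbit_representative (θ θ' ε E m n : ℝ) (hθ : θ' < θ) (hε : 1 < ε)
    (hE : E = (ε ^ 2 * θ - θ') / (ε ^ 2 - 1))
    (h1 : 0 < m - θ * n) (h2 : 0 < m - θ' * n) :
    (∃! k : ℤ, 1 < ε ^ (-2 * k) * ((m - θ' * n) / (m - θ * n)) ∧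
        ε ^ (-2 * k) * ((m - θ' * n) / (m - θ * n)) ≤ ε ^ 2) ∧
    (1 < (m - θ' * n) / (m - θ * n) ↔ 0 < n) ∧
    ((m - θ' * n) / (m - θ * n) ≤ ε ^ 2 ↔ E * n ≤ m) := by
  have hε0 : (0:ℝ) < ε := lt_trans one_pos hε
  have hlog : 0 < Real.log ε := Real.log_pos hε
  set r : ℝ := (m - θ' * n) / (m - θ * n) with hrdef
  have hr : 0 < r := div_pos h2 h1
  refine ⟨?_, ?_, ?_⟩
  · obtain ⟨j, hj, hju⟩ := existsUnique_add_zsmul_mem_Ioc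
      (by linarith : (0:ℝ) < 2 * Real.log ε) (Real.log r) 0
    have key : ∀ k : ℤ, (1 < ε ^ (-2 * k) * r ∧ ε ^ (-2 * k) * r ≤ ε ^ 2) ↔
        Real.log r + (-k) • (2 * Real.log ε) ∈ Set.Ioc (0:ℝ) (0 + 2 * Real.log ε) := by
      intro k
      have hexp : ε ^ (-2 * k) * r = Real.exp (Real.log r + (-k) • (2 * Real.log ε)) := by
        rw [Real.exp_add, Real.exp_log hr, zsmul_eq_mul]
        rw [show ((-k : ℤ):ℝ) * (2 * Real.log ε) = ((-2*k : ℤ):ℝ) * Real.log ε by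
          push_cast; ring]
        rw [← Real.log_zpow, Real.exp_log (zpow_pos hε0 _)]
        ring
      have hε2 : (ε:ℝ) ^ 2 = Real.exp (2 * Real.log ε) := by
        rw [show 2 * Real.log ε = Real.log (ε ^ 2) by rw [Real.log_pow]; push_cast; ring,
          Real.exp_log (pow_pos hε0 2)]
      rw [hexp, hε2, Set.mem_Ioc, zero_add]
      rw [Real.one_lt_exp_iff, Real.exp_le_exp]
    refine ⟨-j, (key (-j)).mpr (by simpa using hj), ?_⟩
    intro k hk
    have := hju (-k) (by simpa using (key k).mp hk)
    omega
  · rw [one_lt_div h1]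
    constructor
    · intro h; nlinarith
    · intro h; nlinarith
  · rw [div_le_iff₀ h1, hE]
    have hden : (0:ℝ) < ε ^ 2 - 1 := by nlinarith
    rw [div_mul_eq_mul_div, div_le_iff₀ hden]
    constructor
    · intro h; nlinarith
    · intro h; nlinarith
end

section
/- Let s_p, a_p, l_p and g be positive reals with l_p = 2a_p + s_p, and define r_p = −((g−1)(3g + s_p − 1))/(3 s_p g) + ((g−1)²/(3g²))·s_p − ((2s_p − 1)(g−1)²)/(s_p g²). If s_p < g and g/s_p = p + 1 + O(1) as parameters grow, then r_p = −(p+1) + s_p/3 + O(1). -/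
/-- With `l_p = 2a_p + s_p` and
`r_p = −((g−1)(3g+s_p−1))/(3s_p g) + ((g−1)²/(3g²))s_p − ((2s_p−1)(g−1)²)/(s_p g²)`,
if `s_p < g` and `g/s_p = p + 1 + O(1)`, then `r_p = −(p+1) + s_p/3 + O(1)`. -/
theorem admissible_graph_constant_asymptotic :
    ∀ C₀ : ℝ, 0 < C₀ → ∃ C : ℝ, 0 < C ∧
      ∀ a s l g p : ℝ, 0 < a → 1 ≤ s → s < g → 1 ≤ p → l = 2 * a + s →
        |g / s - (p + 1)| ≤ C₀ →
        |(-((g - 1) * (3 * g + s - 1)) / (3 * s * g) + ((g - 1) ^ 2 / (3 * g ^ 2)) * s -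
            ((2 * s - 1) * (g - 1) ^ 2) / (s * g ^ 2)) - (-(p + 1) + s / 3)| ≤ C := by
  intro C₀ hC₀
  refine ⟨C₀ + 15, by linarith, ?_⟩
  intro a s l g p _ hs hsg _ _ hO
  have hs0 : (0:ℝ) < s := by linarith
  have hg0 : (0:ℝ) < g := by linarith
  set A : ℝ := -((g - 1) * (3 * g + s - 1)) / (3 * s * g) + ((g - 1) ^ 2 / (3 * g ^ 2)) * s -
      ((2 * s - 1) * (g - 1) ^ 2) / (s * g ^ 2) + (g / s - s / 3) with hA
  have key : A = (-7*s*g^2 + 7*g^2 + 13*s*g - 2*s^2*g - 7*g + s^2 - 6*s + 3) / (3*s*g^2) := by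
    rw [hA]; field_simp; ring
  have hAbound : |A| ≤ 15 := by
    rw [key, abs_div, abs_of_pos (by positivity : (0:ℝ) < 3*s*g^2),
      div_le_iff₀ (by positivity)]
    rw [abs_le]
    constructor <;> nlinarith [sq_nonneg (g - s), sq_nonneg (g - 1), sq_nonneg (s - 1),
      mul_pos hs0 hg0, sq_nonneg g, mul_pos (mul_pos hs0 hg0) hg0, sq_nonneg (s*g - 1)]
  have hO' : |(p + 1) - g / s| ≤ C₀ := by rw [abs_sub_comm]; exact hO
  have : (-((g - 1) * (3 * g + s - 1)) / (3 * s * g) + ((g - 1) ^ 2 / (3 * g ^ 2)) * s -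
      ((2 * s - 1) * (g - 1) ^ 2) / (s * g ^ 2)) - (-(p + 1) + s / 3)
      = A + ((p + 1) - g / s) := by rw [hA]; ring
  rw [this]
  calc |A + ((p + 1) - g / s)| ≤ |A| + |(p + 1) - g / s| := abs_add_le _ _
    _ ≤ 15 + C₀ := add_le_add hAbound hO'
    _ = C₀ + 15 := by ring
end
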